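/- (Simultaneous cycling bound) Let G be a Garside group, p ∈ ℤ, and P, X ∈ G⁺. Let s := P ∧ Δ be the greatest common left divisor of P and Δ. If Δ^{p+1} ≼ X Δ^p P X⁻¹, then X ≽ τ^{−p}(Δ s⁻¹). -/

import Mathlib

/-- A Garside structure on a group `G`: a submonoid `G⁺` of positive elements
together with a Garside element `Δ`, satisfying the Garside axioms. -/
structure GarsideStructure (G : Type*) [Group G] where
  /-- the monoid `G⁺` of positive elements -/
  pos : Submonoid G
  /-- the Garside element `Δ` -/
  Δ : G
  delta_mem : Δ ∈ pos
  /-- `G⁺` is Noetherian -/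
  noetherian : ∀ a ∈ pos, ∃ n : ℕ, ∀ l : List G,
    (∀ x ∈ l, x ∈ pos ∧ x ≠ 1) → l.prod = a → l.length ≤ n
  /-- any two elements of `G⁺` admit a least common right multiple (w.r.t. `≼`) -/
  lcm_right : ∀ a ∈ pos, ∀ b ∈ pos, ∃ m ∈ pos,
    a⁻¹ * m ∈ pos ∧ b⁻¹ * m ∈ pos ∧
      ∀ c ∈ pos, a⁻¹ * c ∈ pos → b⁻¹ * c ∈ pos → m⁻¹ * c ∈ pos
  /-- any two elements of `G⁺` admit a least common left multiple (w.r.t. `≽`) -/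
  lcm_left : ∀ a ∈ pos, ∀ b ∈ pos, ∃ m ∈ pos,
    m * a⁻¹ ∈ pos ∧ m * b⁻¹ ∈ pos ∧
      ∀ c ∈ pos, c * a⁻¹ ∈ pos → c * b⁻¹ ∈ pos → c * m⁻¹ ∈ pos
  /-- `G` is the group of fractions of `G⁺` -/
  fractions : ∀ g : G, ∃ a ∈ pos, ∃ b ∈ pos, g = a⁻¹ * b
  /-- `Δ` is balanced: its left divisors in `G⁺` coincide with its right divisors -/
  balanced : ∀ s ∈ pos, (s⁻¹ * Δ ∈ pos ↔ Δ * s⁻¹ ∈ pos)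
  /-- the set of simple elements (divisors of `Δ`) is finite -/
  simples_finite : {s : G | s ∈ pos ∧ s⁻¹ * Δ ∈ pos}.Finite
  /-- the simple elements generate `G⁺` -/
  simples_generate : Submonoid.closure {s : G | s ∈ pos ∧ s⁻¹ * Δ ∈ pos} = pos

namespace GarsideStructure

variable {G : Type*} [Group G]

/-- `a ≼ b` : left divisibility. -/
def LeftDvd (Γ : GarsideStructure G) (a b : G) : Prop := a⁻¹ * b ∈ Γ.pos

/-- `b ≽ a` : right divisibility. -/
def RightDvd (Γ : GarsideStructure G) (b a : G) : Prop := b * a⁻¹ ∈ Γ.pos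

/-- a simple element: a divisor of `Δ`. -/
def Simple (Γ : GarsideStructure G) (s : G) : Prop := s ∈ Γ.pos ∧ Γ.LeftDvd s Γ.Δ

/-- an atom of `G⁺`. -/
def Atom (Γ : GarsideStructure G) (a : G) : Prop :=
  a ∈ Γ.pos ∧ a ≠ 1 ∧ ∀ b ∈ Γ.pos, ∀ c ∈ Γ.pos, a = b * c → b = 1 ∨ c = 1

/-- the iterated automorphism `τ^k`, where `τ(x) = Δ⁻¹xΔ`; so `τ^k(x) = Δ^(-k) x Δ^k`. -/
def tau (Γ : GarsideStructure G) (k : ℤ) (x : G) : G := Γ.Δ ^ (-k) * x * Γ.Δ ^ k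

/-- `d` is the greatest common left divisor (`∧`) of `a` and `b`. -/
def IsLeftGcd (Γ : GarsideStructure G) (d a b : G) : Prop :=
  d ∈ Γ.pos ∧ Γ.LeftDvd d a ∧ Γ.LeftDvd d b ∧
    ∀ c ∈ Γ.pos, Γ.LeftDvd c a → Γ.LeftDvd c b → Γ.LeftDvd c d

/-- `d` is the greatest common right divisor (`⋀̃`) of `a` and `b`. -/
def IsRightGcd (Γ : GarsideStructure G) (d a b : G) : Prop :=
  d ∈ Γ.pos ∧ Γ.RightDvd a d ∧ Γ.RightDvd b d ∧
    ∀ c ∈ Γ.pos, Γ.RightDvd a c → Γ.RightDvd b c → Γ.RightDvd d c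

/-- membership of a tuple `a ∈ Gʳ` in the interval `[p,q]`:
`pᵢ ≤ inf aᵢ` (i.e. `Δ^pᵢ ≼ aᵢ`) and `sup aᵢ ≤ qᵢ` (i.e. `aᵢ ≼ Δ^qᵢ`) for all `i`. -/
def InInterval (Γ : GarsideStructure G) {r : ℕ} (p q : Fin r → ℤ) (a : Fin r → G) : Prop :=
  ∀ i, Γ.LeftDvd (Γ.Δ ^ (p i)) (a i) ∧ Γ.LeftDvd (a i) (Γ.Δ ^ (q i))

/-- `‖a‖`: the maximal number of atoms in an expression of `a` as a product of atoms. -/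
noncomputable def anorm (Γ : GarsideStructure G) (a : G) : ℕ :=
  sSup {n | ∃ l : List G, (∀ x ∈ l, Γ.Atom x) ∧ l.prod = a ∧ l.length = n}

end GarsideStructure

/-!
Put `Y = τ^p(X)`, a positive element since `τ` preserves `G⁺`. The hypothesis says `Δ ≼ Y P`,
and `Δ ≼ Y Δ = Δ τ(Y)` always holds. Left multiplication by `Y` distributes over `∧`, so
`Δ ≼ Y (P ∧ Δ) = Y s`, which amounts to `Y ≽ Δ s⁻¹`; applying `τ^(-p)` gives the claim.
-/

namespace GarsideStructure

variable {G : Type*} [Group G] (Γ : GarsideStructure G)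

lemma tau_eq_conj (k : ℤ) (x : G) : Γ.tau k x = MulAut.conj (Γ.Δ ^ (-k)) x := by
  rw [tau, MulAut.conj_apply, zpow_neg, inv_inv]

lemma tau_zero (x : G) : Γ.tau 0 x = x := by
  simp [tau]

lemma tau_tau (j k : ℤ) (x : G) : Γ.tau j (Γ.tau k x) = Γ.tau (k + j) x := by
  simp only [tau]
  group

lemma conj_mem_of_forall_simple {g : G} (hg : ∀ s, Γ.Simple s → MulAut.conj g s ∈ Γ.pos)
    {a : G} (ha : a ∈ Γ.pos) : MulAut.conj g a ∈ Γ.pos := by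
  rw [← Γ.simples_generate] at ha
  exact (Submonoid.closure_le (S := Γ.pos.comap (MulAut.conj g).toMonoidHom)).mpr hg ha

/-- `Δ s Δ⁻¹ = Δ (Δ s⁻¹)⁻¹`, and `Δ s⁻¹` is again simple because `Δ` is balanced. -/
lemma conj_delta_mem {a : G} (ha : a ∈ Γ.pos) : MulAut.conj Γ.Δ a ∈ Γ.pos := by
  refine Γ.conj_mem_of_forall_simple (fun s ⟨hs, hsΔ⟩ ↦ ?_) ha
  have hΔs : Γ.Δ * s⁻¹ ∈ Γ.pos := (Γ.balanced s hs).mp hsΔ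
  have key : MulAut.conj Γ.Δ s = Γ.Δ * (Γ.Δ * s⁻¹)⁻¹ := by
    rw [MulAut.conj_apply]
    group
  simpa [key] using (Γ.balanced _ hΔs).mp (by simpa using hs)

/-- `Δ⁻¹ s Δ = (s⁻¹ Δ)⁻¹ Δ`, and `s⁻¹ Δ` is again simple because `Δ` is balanced. -/
lemma conj_delta_inv_mem {a : G} (ha : a ∈ Γ.pos) : MulAut.conj Γ.Δ⁻¹ a ∈ Γ.pos := by
  refine Γ.conj_mem_of_forall_simple (fun s ⟨hs, hsΔ⟩ ↦ ?_) ha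
  have key : MulAut.conj Γ.Δ⁻¹ s = (s⁻¹ * Γ.Δ)⁻¹ * Γ.Δ := by
    rw [MulAut.conj_apply]
    group
  simpa [key] using (Γ.balanced _ hsΔ).mpr (by simpa [mul_assoc] using hs)

lemma tau_mem (k : ℤ) {a : G} (ha : a ∈ Γ.pos) : Γ.tau k a ∈ Γ.pos := by
  induction k using Int.induction_on with
  | zero => simpa [tau_zero] using ha
  | succ n ih =>
    rw [← tau_tau, tau_eq_conj, zpow_neg_one]
    exact Γ.conj_delta_inv_mem ih
  | pred n ih =>
    rw [sub_eq_add_neg, ← tau_tau, tau_eq_conj, neg_neg, zpow_one]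
    exact Γ.conj_delta_mem ih

lemma leftDvd_mul_left_iff (g : G) {a b : G} : Γ.LeftDvd (g * a) (g * b) ↔ Γ.LeftDvd a b := by
  simp [LeftDvd, mul_assoc]

lemma delta_leftDvd_mul_delta {a : G} (ha : a ∈ Γ.pos) : Γ.LeftDvd Γ.Δ (a * Γ.Δ) := by
  have key : Γ.Δ⁻¹ * (a * Γ.Δ) = Γ.tau 1 a := by
    simp only [tau]
    group
  simpa only [LeftDvd, key] using Γ.tau_mem 1 ha

/-- `a b Δ⁻¹ = τ⁻¹(Δ⁻¹ a b)`. -/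
lemma rightDvd_delta_mul_inv {a b : G} (h : Γ.LeftDvd Γ.Δ (a * b)) :
    Γ.RightDvd a (Γ.Δ * b⁻¹) := by
  have key : a * (Γ.Δ * b⁻¹)⁻¹ = Γ.tau (-1) (Γ.Δ⁻¹ * (a * b)) := by
    simp only [tau]
    group
  simpa only [RightDvd, key] using Γ.tau_mem (-1) h

variable {Γ}

lemma LeftDvd.trans {a b c : G} (hab : Γ.LeftDvd a b) (hbc : Γ.LeftDvd b c) :
    Γ.LeftDvd a c := by
  simpa [LeftDvd, mul_assoc] using Γ.pos.mul_mem hab hbc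

lemma LeftDvd.mul_right {a b c : G} (hab : Γ.LeftDvd a b) (hc : c ∈ Γ.pos) :
    Γ.LeftDvd a (b * c) := by
  simpa [LeftDvd, mul_assoc] using Γ.pos.mul_mem hab hc

lemma RightDvd.tau {a b : G} (h : Γ.RightDvd b a) (k : ℤ) :
    Γ.RightDvd (Γ.tau k b) (Γ.tau k a) := by
  unfold RightDvd
  rw [tau_eq_conj, tau_eq_conj, ← map_inv, ← map_mul, ← tau_eq_conj]
  exact Γ.tau_mem k h

/-- Left multiplication by a positive element distributes over `∧`. -/
lemma IsLeftGcd.leftDvd_mul {a c d b₁ b₂ : G} (hd : Γ.IsLeftGcd d b₁ b₂) (ha : a ∈ Γ.pos)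
    (hc : c ∈ Γ.pos) (hb₁ : b₁ ∈ Γ.pos) (hb₂ : b₂ ∈ Γ.pos)
    (h₁ : Γ.LeftDvd a (c * b₁)) (h₂ : Γ.LeftDvd a (c * b₂)) : Γ.LeftDvd a (c * d) := by
  obtain ⟨m, -, ham, hcm, hmin⟩ := Γ.lcm_right a ha c hc
  have hm₁ : Γ.LeftDvd m (c * b₁) :=
    hmin _ (Γ.pos.mul_mem hc hb₁) h₁ (by simpa [LeftDvd] using hb₁)
  have hm₂ : Γ.LeftDvd m (c * b₂) :=
    hmin _ (Γ.pos.mul_mem hc hb₂) h₂ (by simpa [LeftDvd] using hb₂)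
  have hmc : m = c * (c⁻¹ * m) := by group
  rw [hmc, leftDvd_mul_left_iff] at hm₁ hm₂
  have hmd : Γ.LeftDvd m (c * d) := by
    rw [hmc, leftDvd_mul_left_iff]
    exact hd.2.2.2 _ hcm hm₁ hm₂
  exact LeftDvd.trans ham hmd

end GarsideStructure

/-- Simultaneous cycling bound: for `p ∈ ℤ` and `P, X ∈ G⁺`, with `s := P ∧ Δ`
the greatest common left divisor of `P` and `Δ`: if `Δ^(p+1) ≼ X Δ^p P X⁻¹`,
then `X ≽ τ^(−p)(Δ s⁻¹)`. -/
theorem simultaneous_cycling_bound {G : Type*} [Group G] (Γ : GarsideStructure G)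
    (p : ℤ) (P X : G) (hP : P ∈ Γ.pos) (hX : X ∈ Γ.pos)
    (s : G) (hs : Γ.IsLeftGcd s P Γ.Δ)
    (h : Γ.LeftDvd (Γ.Δ ^ (p + 1)) (X * Γ.Δ ^ p * P * X⁻¹)) :
    Γ.RightDvd X (Γ.tau (-p) (Γ.Δ * s⁻¹)) := by
  set Y := Γ.tau p X with hYX
  have hY : Y ∈ Γ.pos := Γ.tau_mem p hX
  have hYP : Γ.LeftDvd Γ.Δ (Y * P) := by
    have hXP := (Γ.leftDvd_mul_left_iff (Γ.Δ ^ (-p))).mpr (h.mul_right hX)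
    convert hXP using 1
    · group
    · simp only [Y, GarsideStructure.tau]
      group
  have hYs : Γ.LeftDvd Γ.Δ (Y * s) :=
    hs.leftDvd_mul Γ.delta_mem hY hP Γ.delta_mem hYP (Γ.delta_leftDvd_mul_delta hY)
  have hXY : Γ.tau (-p) Y = X := by
    rw [hYX, Γ.tau_tau, add_neg_cancel, Γ.tau_zero]
  simpa only [hXY] using (Γ.rightDvd_delta_mul_inv hYs).tau (-p)
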